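/- Let ξ ∈ ℝ, α ∈ ℝ, and c > 0 with 6|α|c < 1, let φ̄(x) = (x−ξ)|x−ξ| φ((x−ξ)/c), and let G(x) = x + α φ̄(x) (a bijection of ℝ). Let σ: ℝ → ℝ be Lipschitz continuous. Then the transformed diffusion coefficient σ̃: ℝ → ℝ defined by σ̃(z) = σ(G⁻¹(z)) (1 + α φ̄'(G⁻¹(z))) is Lipschitz continuous on ℝ. -/

import Mathlib

open NNReal

/-- The bump function `φ(u) = (1+u)³(1-u)³` for `|u| ≤ 1` and `φ(u) = 0` otherwise. -/
noncomputable def phi (u : ℝ) : ℝ := if |u| ≤ 1 then (1 + u) ^ 3 * (1 - u) ^ 3 else 0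

/-- `φ̄(x) = (x-ξ)|x-ξ| φ((x-ξ)/c)`. -/
noncomputable def phibar (ξ c : ℝ) (x : ℝ) : ℝ := (x - ξ) * |x - ξ| * phi ((x - ξ) / c)

/-- The transform `G(x) = x + α φ̄(x)`. -/
noncomputable def transformG (ξ α c : ℝ) (x : ℝ) : ℝ := x + α * phibar ξ c x

/-!
The transformed coefficient is `h ∘ G⁻¹` with `h x = σ x * (1 + α φ̄'(x))`, so it suffices that
`G⁻¹` and `h` are Lipschitz.

Since `φ(u) = ((1 - u²)⁺)³`, the function `φ̄` is `C¹` with `φ̄'(x) = |x - ξ| k((x - ξ)/c)`, where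
`k = 8w³ - 6w²` for `w = (1 - u²)⁺` is again `C¹` with bounded derivative. Hence `φ̄'` is bounded
by `6c`, Lipschitz, and vanishes outside `[ξ - c, ξ + c]`.

* `G = id + αφ̄` is the identity plus a `6|α|c`-Lipschitz map with `6|α|c < 1`: it is onto by
  Banach's fixed point theorem and expanding, so `G⁻¹` is Lipschitz.
* A Lipschitz function times a Lipschitz function with bounded support is Lipschitz, because the
  first factor is bounded on the support of the second. This applies to `σ φ̄'`, hence to `h`.
-/

open Filter Topology Function Metric Bornology

theorem hasDerivAt_posPart_pow {n : ℕ} (hn : 2 ≤ n) (t : ℝ) :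
    HasDerivAt (fun s : ℝ => s⁺ ^ n) (n * t⁺ ^ (n - 1)) t := by
  refine hasDerivAt_of_hasDerivAt_of_ne' (g := fun t => n * t⁺ ^ (n - 1)) (x := 0)
    (fun y hy => ?_) (by fun_prop) (by fun_prop) t
  rcases hy.lt_or_gt with hneg | hpos
  · have hzero : (fun s : ℝ => s⁺ ^ n) =ᶠ[𝓝 y] fun _ => 0 := by
      filter_upwards [gt_mem_nhds hneg] with s hs
      simp [posPart_eq_zero.2 hs.le, zero_pow (by omega : n ≠ 0)]
    rw [posPart_eq_zero.2 hneg.le, zero_pow (by omega : n - 1 ≠ 0), mul_zero]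
    exact (hasDerivAt_const y 0).congr_of_eventuallyEq hzero
  · have hid : (fun s : ℝ => s⁺ ^ n) =ᶠ[𝓝 y] fun s => s ^ n := by
      filter_upwards [lt_mem_nhds hpos] with s hs
      rw [posPart_eq_self.2 hs.le]
    rw [posPart_eq_self.2 hpos.le]
    exact (hasDerivAt_pow n y).congr_of_eventuallyEq hid

theorem hasDerivAt_mul_abs (t : ℝ) : HasDerivAt (fun s : ℝ => s * |s|) (2 * |t|) t := by
  refine hasDerivAt_of_hasDerivAt_of_ne' (g := fun t => 2 * |t|) (x := 0)
    (fun y hy => ?_) (by fun_prop) (by fun_prop) t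
  rcases hy.lt_or_gt with hneg | hpos
  · have h : (fun s : ℝ => s * |s|) =ᶠ[𝓝 y] fun s => -s ^ 2 := by
      filter_upwards [gt_mem_nhds hneg] with s hs
      rw [abs_of_neg hs]; ring
    rw [abs_of_neg hneg]
    convert ((hasDerivAt_pow 2 y).neg).congr_of_eventuallyEq h using 1
    ring
  · have h : (fun s : ℝ => s * |s|) =ᶠ[𝓝 y] fun s => s ^ 2 := by
      filter_upwards [lt_mem_nhds hpos] with s hs
      rw [abs_of_pos hs]; ring
    rw [abs_of_pos hpos]
    convert (hasDerivAt_pow 2 y).congr_of_eventuallyEq h using 1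
    ring

theorem posPart_mul_self (a : ℝ) : a⁺ * a = a⁺ ^ 2 := by
  rcases le_total a 0 with h | h
  · simp [posPart_eq_zero.2 h]
  · rw [posPart_eq_self.2 h, sq]

theorem posPart_one_sub_sq_cases (u : ℝ) :
    (u ^ 2 ≤ 1 ∧ (1 - u ^ 2)⁺ = 1 - u ^ 2) ∨ (1 - u ^ 2)⁺ = 0 := by
  rcases le_total (u ^ 2) 1 with hu | hu
  · exact .inl ⟨hu, posPart_eq_self.2 (by linarith)⟩
  · exact .inr (posPart_eq_zero.2 (by linarith))

section Lipschitz

variable {α R : Type*} [PseudoMetricSpace α] [SeminormedRing R] {f g : α → R} {Kf Kg : ℝ≥0}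

theorem LipschitzWith.norm_le_add_mul_of_mem_closedBall (hf : LipschitzWith Kf f) {a x : α}
    {r : ℝ} (hx : x ∈ closedBall a r) : ‖f x‖ ≤ ‖f a‖ + Kf * r :=
  calc ‖f x‖ ≤ ‖f a‖ + dist (f x) (f a) := by rw [dist_eq_norm]; exact norm_le_insert' _ _
    _ ≤ ‖f a‖ + Kf * r := by
      gcongr; exact (hf.dist_le_mul x a).trans (by gcongr; exact mem_closedBall.1 hx)

theorem LipschitzWith.dist_mul_le (hf : LipschitzWith Kf f) (hg : LipschitzWith Kg g)
    {Cf Cg : ℝ} (hgC : ∀ x, ‖g x‖ ≤ Cg) (x : α) {y : α} (hfy : ‖f y‖ ≤ Cf) :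
    dist (f x * g x) (f y * g y) ≤ (Kf * Cg + Cf * Kg) * dist x y := by
  rw [dist_eq_norm, show f x * g x - f y * g y = (f x - f y) * g x + f y * (g x - g y) by
    noncomm_ring]
  calc ‖(f x - f y) * g x + f y * (g x - g y)‖
      ≤ ‖f x - f y‖ * ‖g x‖ + ‖f y‖ * ‖g x - g y‖ :=
        (norm_add_le _ _).trans (add_le_add (norm_mul_le _ _) (norm_mul_le _ _))
    _ ≤ (Kf * dist x y) * Cg + Cf * (Kg * dist x y) := by
        rw [← dist_eq_norm, ← dist_eq_norm]
        gcongr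
        · exact hf.dist_le_mul x y
        · exact hgC x
        · exact (norm_nonneg _).trans hfy
        · exact hg.dist_le_mul x y
    _ = (Kf * Cg + Cf * Kg) * dist x y := by ring

theorem LipschitzWith.exists_lipschitzWith_mul (hf : LipschitzWith Kf f)
    (hg : LipschitzWith Kg g) (hsupp : IsBounded (support g)) :
    ∃ K, LipschitzWith K fun x => f x * g x := by
  rcases isEmpty_or_nonempty α with hα | ⟨⟨a⟩⟩
  · exact ⟨0, fun x => isEmptyElim x⟩
  obtain ⟨r, hr, hsub⟩ := hsupp.subset_closedBall_lt 0 a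
  have hg0 : ∀ x ∉ closedBall a r, g x = 0 := fun x hx => notMem_support.1 (mt (@hsub x) hx)
  have hgC : ∀ x, ‖g x‖ ≤ ‖g a‖ + Kg * r := by
    intro x
    by_cases hx : x ∈ closedBall a r
    · exact hg.norm_le_add_mul_of_mem_closedBall hx
    · rw [hg0 x hx, norm_zero]; positivity
  refine ⟨_, LipschitzWith.of_dist_le' (K := Kf * (‖g a‖ + Kg * r) + (‖f a‖ + Kf * r) * Kg)
    fun x y => ?_⟩
  by_cases hy : y ∈ closedBall a r
  · exact hf.dist_mul_le hg hgC x (hf.norm_le_add_mul_of_mem_closedBall hy)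
  by_cases hx : x ∈ closedBall a r
  · rw [dist_comm, dist_comm x]
    exact hf.dist_mul_le hg hgC y (hf.norm_le_add_mul_of_mem_closedBall hx)
  rw [hg0 x hx, hg0 y hy, mul_zero, mul_zero, dist_self]
  positivity

end Lipschitz

section IdAddContraction

variable {E : Type*} [NormedAddCommGroup E] [CompleteSpace E] {g : E → E} {K : ℝ≥0}

theorem LipschitzWith.surjective_id_add (hg : LipschitzWith K g) (hK : K < 1) :
    Surjective fun x => x + g x := by
  intro y
  have hcontr : ContractingWith K fun x => y - g x :=
    ⟨hK, LipschitzWith.of_dist_le_mul fun x x' => by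
      simpa only [dist_sub_left] using hg.dist_le_mul x x'⟩
  exact ⟨hcontr.fixedPoint, (sub_eq_iff_eq_add.1 hcontr.fixedPoint_isFixedPt).symm⟩

theorem LipschitzWith.lipschitzWith_invFun_id_add (hg : LipschitzWith K g) (hK : K < 1) :
    LipschitzWith (1 - K)⁻¹ (invFun fun x => x + g x) := by
  have hanti : AntilipschitzWith (1 - K)⁻¹ fun x => x + g x := by
    simpa only [inv_one, id_eq] using AntilipschitzWith.id.add_lipschitzWith hg (by rwa [inv_one])
  exact hanti.to_rightInverse (rightInverse_invFun (hg.surjective_id_add hK))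

end IdAddContraction

theorem phi_eq_posPart_pow (u : ℝ) : phi u = (1 - u ^ 2)⁺ ^ 3 := by
  rw [phi]
  split_ifs with h
  · rw [posPart_eq_self.2 (by nlinarith [abs_nonneg u, sq_abs u])]; ring
  · rw [posPart_eq_zero.2 (by nlinarith [sq_abs u]), zero_pow three_ne_zero]

theorem hasDerivAt_phi (u : ℝ) : HasDerivAt phi (-6 * u * (1 - u ^ 2)⁺ ^ 2) u := by
  have hinner : HasDerivAt (fun v : ℝ => 1 - v ^ 2) (-(2 * u)) u := by
    simpa using (hasDerivAt_pow 2 u).const_sub 1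
  have := (hasDerivAt_posPart_pow (n := 3) (by norm_num) (1 - u ^ 2)).comp u hinner
  rw [show phi = fun v => (1 - v ^ 2)⁺ ^ 3 from funext phi_eq_posPart_pow]
  exact this.congr_deriv (by push_cast; ring)

/-- On `|u| ≤ 1` this is `(1 - u²)²(2 - 8u²)`; as a polynomial in `w = (1 - u²)⁺` it is `C¹`. -/
noncomputable def phibarSlope (u : ℝ) : ℝ := 8 * (1 - u ^ 2)⁺ ^ 3 - 6 * (1 - u ^ 2)⁺ ^ 2

theorem hasDerivAt_phibar (ξ c x : ℝ) :
    HasDerivAt (phibar ξ c) (|x - ξ| * phibarSlope ((x - ξ) / c)) x := by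
  have hscale : HasDerivAt (fun y => (y - ξ) / c) (1 / c) x :=
    ((hasDerivAt_id x).sub_const ξ).div_const c
  refine (((hasDerivAt_mul_abs (x - ξ)).comp_sub_const x ξ).mul
    ((hasDerivAt_phi ((x - ξ) / c)).comp x hscale)).congr_deriv ?_
  simp only [Function.comp, phi_eq_posPart_pow, phibarSlope]
  set u := (x - ξ) / c
  have hu : (x - ξ) * (1 / c) = u := by ring
  -- `w (1 - u²) = w²` turns the product rule's `|x - ξ| (2w³ - 6u²w²)` into `|x - ξ| (8w³ - 6w²)`
  linear_combination (-6 * |x - ξ| * u * (1 - u ^ 2)⁺ ^ 2) * hu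
    + (6 * |x - ξ| * (1 - u ^ 2)⁺) * posPart_mul_self (1 - u ^ 2)

theorem phibarSlope_eq_zero {u : ℝ} (hu : 1 ≤ |u|) : phibarSlope u = 0 := by
  rw [phibarSlope, posPart_eq_zero.2 (by nlinarith [sq_abs u])]
  ring

theorem abs_phibarSlope_le (u : ℝ) : |phibarSlope u| ≤ 6 := by
  rcases posPart_one_sub_sq_cases u with ⟨hu, hw⟩ | hw <;> rw [phibarSlope, hw]
  · rw [abs_le]
    constructor <;> nlinarith [sq_nonneg u, sq_nonneg (1 - u ^ 2),
      mul_nonneg (sq_nonneg u) (sq_nonneg (1 - u ^ 2))]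
  · norm_num

theorem hasDerivAt_phibarSlope (u : ℝ) :
    HasDerivAt phibarSlope (24 * u * (1 - u ^ 2)⁺ * (1 - 2 * (1 - u ^ 2)⁺)) u := by
  have hinner : HasDerivAt (fun v : ℝ => 1 - v ^ 2) (-(2 * u)) u := by
    simpa using (hasDerivAt_pow 2 u).const_sub 1
  have hcube := (hasDerivAt_posPart_pow (n := 3) (by norm_num) (1 - u ^ 2)).comp u hinner
  have hsq := (hasDerivAt_posPart_pow (n := 2) le_rfl (1 - u ^ 2)).comp u hinner
  exact ((hcube.const_mul 8).sub (hsq.const_mul 6)).congr_deriv (by push_cast; ring)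

theorem abs_deriv_phibarSlope_le (u : ℝ) : |deriv phibarSlope u| ≤ 24 := by
  rw [(hasDerivAt_phibarSlope u).deriv]
  rcases posPart_one_sub_sq_cases u with ⟨hu, hw⟩ | hw <;> rw [hw]
  · have hu1 : |u| ≤ 1 := (sq_le_one_iff_abs_le_one u).1 hu
    have hw1 : |1 - u ^ 2| ≤ 1 := abs_le.2 ⟨by linarith, by nlinarith [sq_nonneg u]⟩
    have hw2 : |1 - 2 * (1 - u ^ 2)| ≤ 1 := abs_le.2 ⟨by nlinarith [sq_nonneg u], by linarith⟩
    calc |24 * u * (1 - u ^ 2) * (1 - 2 * (1 - u ^ 2))|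
        = 24 * |u| * |1 - u ^ 2| * |1 - 2 * (1 - u ^ 2)| := by simp only [abs_mul]; norm_num
      _ ≤ 24 * 1 * 1 * 1 := by gcongr
      _ = 24 := by norm_num
  · norm_num

theorem lipschitzWith_phibarSlope : LipschitzWith 24 phibarSlope :=
  lipschitzWith_of_nnnorm_deriv_le (fun u => (hasDerivAt_phibarSlope u).differentiableAt)
    fun u => by
      rw [← NNReal.coe_le_coe, coe_nnnorm, Real.norm_eq_abs]
      exact abs_deriv_phibarSlope_le u

section Phibar

variable {ξ c : ℝ}

theorem deriv_phibar : deriv (phibar ξ c) = fun x => |x - ξ| * phibarSlope ((x - ξ) / c) :=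
  funext fun x => (hasDerivAt_phibar ξ c x).deriv

theorem phibarSlope_div_eq_zero (hc : 0 < c) {x : ℝ} (hx : c ≤ |x - ξ|) :
    phibarSlope ((x - ξ) / c) = 0 :=
  phibarSlope_eq_zero (by rwa [abs_div, abs_of_pos hc, le_div_iff₀ hc, one_mul])

theorem abs_deriv_phibar_le (hc : 0 < c) (x : ℝ) : |deriv (phibar ξ c) x| ≤ 6 * c := by
  rw [deriv_phibar, abs_mul, abs_abs]
  rcases le_total |x - ξ| c with hx | hx
  · nlinarith [abs_nonneg (x - ξ), abs_phibarSlope_le ((x - ξ) / c)]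
  · rw [phibarSlope_div_eq_zero hc hx, abs_zero, mul_zero]
    positivity

theorem lipschitzWith_phibar (hc : 0 < c) : LipschitzWith (6 * c).toNNReal (phibar ξ c) :=
  lipschitzWith_of_nnnorm_deriv_le (fun x => (hasDerivAt_phibar ξ c x).differentiableAt)
    fun x => by
      rw [← NNReal.coe_le_coe, coe_nnnorm, Real.norm_eq_abs, Real.coe_toNNReal _ (by positivity)]
      exact abs_deriv_phibar_le hc x

theorem support_phibarSlope_div_subset (hc : 0 < c) :
    support (fun x => phibarSlope ((x - ξ) / c)) ⊆ closedBall ξ c := fun x hx => by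
  by_contra hxc
  rw [mem_closedBall, Real.dist_eq, not_le] at hxc
  exact hx (phibarSlope_div_eq_zero hc hxc.le)

theorem support_deriv_phibar_subset (hc : 0 < c) :
    support (deriv (phibar ξ c)) ⊆ closedBall ξ c := by
  rw [deriv_phibar]
  exact (support_mul_subset_right _ _).trans (support_phibarSlope_div_subset hc)

theorem exists_lipschitzWith_deriv_phibar (hc : 0 < c) :
    ∃ K, LipschitzWith K (deriv (phibar ξ c)) := by
  have habs : LipschitzWith 1 fun x : ℝ => |x - ξ| :=
    LipschitzWith.of_dist_le_mul fun x y => by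
      simpa [Real.dist_eq] using abs_abs_sub_abs_le_abs_sub (x - ξ) (y - ξ)
  have hscale : LipschitzWith ‖c⁻¹‖₊ fun x : ℝ => (x - ξ) / c :=
    LipschitzWith.of_dist_le_mul fun x y => by
      rw [Real.dist_eq, Real.dist_eq, div_sub_div_same, sub_sub_sub_cancel_right, abs_div,
        div_eq_inv_mul, coe_nnnorm, norm_inv, Real.norm_eq_abs]
  rw [deriv_phibar]
  exact habs.exists_lipschitzWith_mul (lipschitzWith_phibarSlope.comp hscale)
    (isBounded_closedBall.subset (support_phibarSlope_div_subset hc))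

end Phibar

/-- if `σ` is Lipschitz, the transformed diffusion coefficient
`σ̃(z) = σ(G⁻¹(z))(1 + α φ̄'(G⁻¹(z)))` is Lipschitz continuous on `ℝ`. -/
theorem transformed_diffusion_lipschitz
    (ξ α c : ℝ) (hc : 0 < c) (hαc : 6 * |α| * c < 1)
    (σ : ℝ → ℝ) (Lσ : ℝ≥0) (hσ : LipschitzWith Lσ σ) :
    ∃ K : ℝ≥0, LipschitzWith K (fun z : ℝ =>
      σ (Function.invFun (transformG ξ α c) z)
        * (1 + α * deriv (phibar ξ c) (Function.invFun (transformG ξ α c) z))) := by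
  have hpert : LipschitzWith (‖α‖₊ * (6 * c).toNNReal) fun x => α • phibar ξ c x :=
    (lipschitzWith_smul α).comp (lipschitzWith_phibar hc)
  have hcontr : ‖α‖₊ * (6 * c).toNNReal < 1 := by
    rw [← NNReal.coe_lt_coe, NNReal.coe_mul, coe_nnnorm, Real.norm_eq_abs,
      Real.coe_toNNReal _ (by positivity), NNReal.coe_one]
    linarith
  have hinv : LipschitzWith _ (invFun (transformG ξ α c)) :=
    hpert.lipschitzWith_invFun_id_add hcontr
  obtain ⟨K, hK⟩ := exists_lipschitzWith_deriv_phibar (ξ := ξ) hc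
  obtain ⟨K', hK'⟩ := hσ.exists_lipschitzWith_mul hK
    (isBounded_closedBall.subset (support_deriv_phibar_subset hc))
  have hcoef : LipschitzWith (Lσ + ‖α‖₊ * K') fun x => σ x * (1 + α * deriv (phibar ξ c) x) := by
    have hsplit : (fun x => σ x * (1 + α * deriv (phibar ξ c) x))
        = fun x => σ x + α • (σ x * deriv (phibar ξ c) x) := by
      ext x; rw [smul_eq_mul]; ring
    rw [hsplit]
    exact hσ.add ((lipschitzWith_smul α).comp hK')
  exact ⟨_, hcoef.comp hinv⟩
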